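/- arXiv:1902.03425 — 4 statements merged into one kernel-verified Lean document; each statement's English description precedes it below -/
import Mathlib

section
/- In the missing-sampling model for delta modulation, for every frequency index m ∈ {0,…,N−1}, the variance of the discrete Fourier transform of the sampled signal satisfies E[|Y_d(m) − p·X(m)|²] = (p − p²)·ε_x + p·N·Δ²/4, where ε_x = Σ_{n=0}^{N−1} x(n)², Y_d(m) = Σ_{n=0}^{N−1} y_d(n) e^{−2πi nm/N}, and X(m) = Σ_{n=0}^{N−1} x(n) e^{−2πi nm/N}. -/
open MeasureTheory ProbabilityTheory

/-- The DFT kernel `e^{-2πi n m / N}`. -/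
noncomputable def dftKernel (N : ℕ) (n m : Fin N) : ℂ :=
  Complex.exp (-2 * (Real.pi : ℂ) * Complex.I * ((n : ℕ) : ℂ) * ((m : ℕ) : ℂ) / ((N : ℕ) : ℂ))

/-!
Write `y n = p x n + z n`. The centred samples `z n` are independent with variance
`(p - p²) x(n)² + p Δ²/4`, and `Y_d(m) - p X(m) = Σ z n e_n` with `|e_n| = 1`. Splitting
`|Σ z n e_n|²` into the squares of its real and imaginary parts, each is the variance of a
linear combination of independent variables, so the cross terms vanish and the expectation is
`Σ |e_n|² Var(z n) = Σ Var(z n)`.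
-/

theorem norm_dftKernel (N : ℕ) (n m : Fin N) : ‖dftKernel N n m‖ = 1 := by
  rw [dftKernel, Complex.norm_exp]
  simp [Complex.div_re]

section

variable {Ω ι : Type*} [MeasurableSpace Ω] {μ : Measure Ω} [IsFiniteMeasure μ] [Fintype ι]
  {X : ι → Ω → ℝ}

theorem integral_sq_sum_const_mul_centered (hX : ∀ i, MemLp (X i) 2 μ)
    (hindep : Pairwise fun i j => X i ⟂ᵢ[μ] X j) (a : ι → ℝ) :
    ∫ ω, (∑ i, a i * (X i ω - μ[X i])) ^ 2 ∂μ = ∑ i, a i ^ 2 * Var[X i; μ] := by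
  set Y := ∑ i, fun ω => a i * X i ω with hY
  have hmean : μ[Y] = ∑ i, a i * μ[X i] := by
    simp only [hY, Finset.sum_apply]
    rw [integral_finsetSum _ fun i _ => ((hX i).integrable one_le_two).const_mul (a i)]
    simp only [integral_const_mul]
  have hvar : Var[Y; μ] = ∑ i, a i ^ 2 * Var[X i; μ] := by
    rw [hY, IndepFun.variance_sum (fun i _ => (hX i).const_mul (a i))
      fun i _ j _ hij =>
        (hindep hij).comp (measurable_const_mul (a i)) (measurable_const_mul (a j))]
    simp only [variance_const_mul]
  have hYmeas : AEMeasurable Y μ :=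
    (memLp_finsetSum' _ fun i _ => (hX i).const_mul (a i)).aemeasurable
  rw [← hvar, variance_eq_integral hYmeas, hmean]
  simp only [hY, Finset.sum_apply, mul_sub, Finset.sum_sub_distrib]

theorem integral_norm_sq_sum_centered_mul (hX : ∀ i, MemLp (X i) 2 μ)
    (hindep : Pairwise fun i j => X i ⟂ᵢ[μ] X j) (w : ι → ℂ) :
    ∫ ω, ‖∑ i, ((X i ω - μ[X i] : ℝ) : ℂ) * w i‖ ^ 2 ∂μ = ∑ i, ‖w i‖ ^ 2 * Var[X i; μ] := by
  have hsq (a : ι → ℝ) : Integrable (fun ω => (∑ i, a i * (X i ω - μ[X i])) ^ 2) μ :=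
    (memLp_finsetSum _ fun i _ => ((hX i).sub (memLp_const (μ[X i]))).const_mul (a i)).integrable_sq
  have hsplit (ω : Ω) : ‖∑ i, ((X i ω - μ[X i] : ℝ) : ℂ) * w i‖ ^ 2 =
      (∑ i, (w i).re * (X i ω - μ[X i])) ^ 2 + (∑ i, (w i).im * (X i ω - μ[X i])) ^ 2 := by
    simp only [Complex.sq_norm, Complex.normSq_apply, Complex.re_sum, Complex.im_sum,
      Complex.re_ofReal_mul, Complex.im_ofReal_mul, mul_comm (w _).re, mul_comm (w _).im]
    ring
  simp only [hsplit]
  rw [integral_add (hsq _) (hsq _), integral_sq_sum_const_mul_centered hX hindep,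
    integral_sq_sum_const_mul_centered hX hindep, ← Finset.sum_add_distrib]
  refine Finset.sum_congr rfl fun i _ => ?_
  rw [← add_mul, Complex.sq_norm, Complex.normSq_apply, sq, sq]

end

/-- The law of one sample `y_d(n)` of the missing-sampling model, with `c = x(n)` and `d = Δ/2`. -/
noncomputable def missingSampleLaw (p c d : ℝ) : Measure ℝ :=
  ENNReal.ofReal (1 - p) • Measure.dirac 0 + ENNReal.ofReal (p / 2) • Measure.dirac (c + d) +
    ENNReal.ofReal (p / 2) • Measure.dirac (c - d)

namespace missingSampleLaw

variable {p : ℝ} (c d : ℝ)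

theorem integrable (f : ℝ → ℝ) : Integrable f (missingSampleLaw p c d) := by
  unfold missingSampleLaw
  refine .add_measure (.add_measure ?_ ?_) ?_ <;>
    exact (integrable_dirac enorm_lt_top).smul_measure ENNReal.ofReal_ne_top

theorem integral_eq (hp0 : 0 ≤ p) (hp1 : p ≤ 1) (f : ℝ → ℝ) :
    ∫ t, f t ∂missingSampleLaw p c d =
      (1 - p) * f 0 + p / 2 * f (c + d) + p / 2 * f (c - d) := by
  have hint := fun a r => (integrable_dirac (a := a) (enorm_lt_top (x := f a))).smul_measure
    (ENNReal.ofReal_ne_top (r := r))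
  rw [missingSampleLaw, integral_add_measure (.add_measure (hint _ _) (hint _ _)) (hint _ _),
    integral_add_measure (hint _ _) (hint _ _)]
  simp only [integral_smul_measure, integral_dirac, smul_eq_mul]
  rw [ENNReal.toReal_ofReal (by linarith), ENNReal.toReal_ofReal (by linarith)]

theorem integral_id (hp0 : 0 ≤ p) (hp1 : p ≤ 1) :
    ∫ t, t ∂missingSampleLaw p c d = p * c := by
  rw [integral_eq c d hp0 hp1]; ring

theorem variance_id (hp0 : 0 ≤ p) (hp1 : p ≤ 1) :
    Var[id; missingSampleLaw p c d] = (p - p ^ 2) * c ^ 2 + p * d ^ 2 := by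
  rw [variance_eq_integral measurable_id.aemeasurable]
  simp only [id, integral_id c d hp0 hp1, integral_eq c d hp0 hp1]
  ring

theorem memLp_id : MemLp id 2 (missingSampleLaw p c d) :=
  (memLp_two_iff_integrable_sq aestronglyMeasurable_id).2 (integrable c d _)

end missingSampleLaw

section

variable {Ω : Type*} [MeasurableSpace Ω] {μ : Measure Ω} {Y : Ω → ℝ} {p c d : ℝ}

theorem memLp_of_map_eq_missingSampleLaw (hY : AEMeasurable Y μ)
    (hlaw : μ.map Y = missingSampleLaw p c d) : MemLp Y 2 μ :=
  (memLp_map_measure_iff aestronglyMeasurable_id hY).1 (hlaw ▸ missingSampleLaw.memLp_id c d)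

theorem integral_of_map_eq_missingSampleLaw (hp0 : 0 ≤ p) (hp1 : p ≤ 1) (hY : AEMeasurable Y μ)
    (hlaw : μ.map Y = missingSampleLaw p c d) : μ[Y] = p * c := by
  rw [← missingSampleLaw.integral_id c d hp0 hp1, ← hlaw]
  exact (integral_map hY aestronglyMeasurable_id).symm

theorem variance_of_map_eq_missingSampleLaw (hp0 : 0 ≤ p) (hp1 : p ≤ 1) (hY : AEMeasurable Y μ)
    (hlaw : μ.map Y = missingSampleLaw p c d) : Var[Y; μ] = (p - p ^ 2) * c ^ 2 + p * d ^ 2 := by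
  rw [← missingSampleLaw.variance_id c d hp0 hp1, ← hlaw, variance_id_map hY]

end

theorem dm_dft_variance_general
    {Ω : Type*} [MeasurableSpace Ω] (μ : Measure Ω) [IsProbabilityMeasure μ]
    (N : ℕ) (x : Fin N → ℝ) (p Δ : ℝ)
    (hp0 : 0 ≤ p) (hp1 : p ≤ 1)
    (y : Fin N → Ω → ℝ) (hmeas : ∀ n, Measurable (y n))
    (hindep : iIndepFun y μ)
    (hlaw : ∀ n, Measure.map (y n) μ =
      ENNReal.ofReal (1 - p) • Measure.dirac (0 : ℝ) +
      ENNReal.ofReal (p / 2) • Measure.dirac (x n + Δ / 2) +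
      ENNReal.ofReal (p / 2) • Measure.dirac (x n - Δ / 2))
    (m : Fin N) :
    (∫ ω, ‖(∑ n : Fin N, (y n ω : ℂ) * dftKernel N n m) -
        (p : ℂ) * ∑ n : Fin N, (x n : ℂ) * dftKernel N n m‖ ^ 2 ∂μ) =
      (p - p ^ 2) * (∑ n : Fin N, (x n) ^ 2) + p * N * Δ ^ 2 / 4 := by
  have hlaw' (n : Fin N) : μ.map (y n) = missingSampleLaw p (x n) (Δ / 2) := hlaw n
  have hmean (n : Fin N) : μ[y n] = p * x n :=
    integral_of_map_eq_missingSampleLaw hp0 hp1 (hmeas n).aemeasurable (hlaw' n)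
  have hcentered (ω : Ω) : (∑ n, (y n ω : ℂ) * dftKernel N n m) -
      (p : ℂ) * ∑ n, (x n : ℂ) * dftKernel N n m =
        ∑ n, ((y n ω - μ[y n] : ℝ) : ℂ) * dftKernel N n m := by
    rw [Finset.mul_sum, ← Finset.sum_sub_distrib]
    refine Finset.sum_congr rfl fun n _ => ?_
    push_cast [hmean]
    ring
  simp only [hcentered]
  rw [integral_norm_sq_sum_centered_mul
    (fun n => memLp_of_map_eq_missingSampleLaw (hmeas n).aemeasurable (hlaw' n))
    (fun i j hij => hindep.indepFun hij)]
  simp only [norm_dftKernel, one_pow, one_mul,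
    variance_of_map_eq_missingSampleLaw hp0 hp1 (hmeas _).aemeasurable (hlaw' _),
    Finset.sum_add_distrib, ← Finset.mul_sum, Finset.sum_const, Finset.card_univ,
    Fintype.card_fin, nsmul_eq_mul]
  ring

/-- In the missing-sampling model for delta modulation, for every
frequency index `m`, `E[|Y_d(m) − p·X(m)|²] = (p − p²)·ε_x + p·N·Δ²/4`,
where `ε_x = Σ x(n)²` and `Y_d`, `X` are the DFTs of `y_d`, `x`. -/
theorem dm_dft_variance
    {Ω : Type*} [MeasurableSpace Ω] (μ : Measure Ω) [IsProbabilityMeasure μ]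
    (N : ℕ) (hN : 0 < N) (x : Fin N → ℝ) (p Δ : ℝ)
    (hp0 : 0 ≤ p) (hp1 : p ≤ 1) (hΔ : 0 < Δ)
    (y : Fin N → Ω → ℝ) (hmeas : ∀ n, Measurable (y n))
    (hindep : iIndepFun y μ)
    (hlaw : ∀ n, Measure.map (y n) μ =
      ENNReal.ofReal (1 - p) • Measure.dirac (0 : ℝ) +
      ENNReal.ofReal (p / 2) • Measure.dirac (x n + Δ / 2) +
      ENNReal.ofReal (p / 2) • Measure.dirac (x n - Δ / 2))
    (m : Fin N) :
    (∫ ω, ‖(∑ n : Fin N, (y n ω : ℂ) * dftKernel N n m) -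
        (p : ℂ) * ∑ n : Fin N, (x n : ℂ) * dftKernel N n m‖ ^ 2 ∂μ) =
      (p - p ^ 2) * (∑ n : Fin N, (x n) ^ 2) + p * N * Δ ^ 2 / 4 :=
  dm_dft_variance_general μ N x p Δ hp0 hp1 y hmeas hindep hlaw m
end

section
/- Let x : {0,…,N−1} → ℝ be deterministic, let λ be a real relaxation parameter, and define z(n) = λ·d(n)·(x(n) + q(n)) + (1 − λ·d(n))·w(n), where for each n: d(n) is Bernoulli(p), q(n) takes values Δ/2 and −Δ/2 with probability 1/2 each, w(n) is an integrable real random variable, and d(n) is independent of q(n) and the pair (d(n), q(n)) is independent of w(n). Then for every frequency index m, E[Z(m)] = λ·p·X(m) + (1 − λ·p)·E[W(m)], where Z, X, W denote the discrete Fourier transforms of z, x, w respectively. -/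
/-!
Both sides are linear in the samples, so it suffices to compute `E[z(n)]` for each `n`.
Since `E[q] = 0` and `d ⟂ q`, the signal part gives `λ E[d (x + q)] = λ p x`; since
`(d, q) ⟂ w`, the noise part factorizes as `E[1 - λ d] E[w] = (1 - λ p) E[w]`.
Independence also supplies the integrability of both products, so only `d` and `q` need
to be integrable, which their two-point laws guarantee.
-/

open MeasureTheory ProbabilityTheory

section TwoPointLaw

variable {Ω : Type*} [MeasurableSpace Ω] {μ : Measure Ω} {f : Ω → ℝ} {a b : ℝ} {ca cb : ENNReal}

lemma integrable_of_map_eq_two_point (hf : AEMeasurable f μ) (hca : ca ≠ ⊤) (hcb : cb ≠ ⊤)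
    (hlaw : μ.map f = ca • Measure.dirac a + cb • Measure.dirac b) :
    Integrable f μ := by
  have hid : Integrable id (μ.map f) := by
    rw [hlaw]
    exact ((integrable_dirac (by simp)).smul_measure hca).add_measure
      ((integrable_dirac (by simp)).smul_measure hcb)
  exact (integrable_map_measure aestronglyMeasurable_id hf).1 hid

lemma integral_of_map_eq_two_point (hf : AEMeasurable f μ) (hca : ca ≠ ⊤) (hcb : cb ≠ ⊤)
    (hlaw : μ.map f = ca • Measure.dirac a + cb • Measure.dirac b) :
    ∫ ω, f ω ∂μ = ca.toReal * a + cb.toReal * b := by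
  have hmap : ∫ ω, f ω ∂μ = ∫ y, y ∂(μ.map f) :=
    (integral_map hf aestronglyMeasurable_id).symm
  rw [hmap, hlaw,
    integral_add_measure ((integrable_dirac (by simp)).smul_measure hca)
      ((integrable_dirac (by simp)).smul_measure hcb),
    integral_smul_measure, integral_smul_measure, integral_dirac, integral_dirac]
  simp only [smul_eq_mul]

end TwoPointLaw

section RelaxationStep

variable {Ω : Type*} [MeasurableSpace Ω] {μ : Measure Ω} [IsProbabilityMeasure μ]
  {d q w : Ω → ℝ} (x lam : ℝ)

lemma integrable_relaxation_step (hd : Integrable d μ) (hq : Integrable q μ)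
    (hw : Integrable w μ) (hdq : IndepFun d q μ)
    (hdqw : IndepFun (fun ω => (d ω, q ω)) w μ) :
    Integrable (fun ω => lam * d ω * (x + q ω) + (1 - lam * d ω) * w ω) μ := by
  have hindep_signal : IndepFun d (fun ω => x + q ω) μ :=
    hdq.comp measurable_id (measurable_const_add x)
  have hindep_noise : IndepFun (fun ω => 1 - lam * d ω) w μ :=
    hdqw.comp (φ := fun y : ℝ × ℝ => 1 - lam * y.1) (by fun_prop) measurable_id
  have hsignal : Integrable (fun ω => d ω * (x + q ω)) μ :=
    hindep_signal.integrable_mul hd ((integrable_const x).add hq)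
  have hnoise : Integrable (fun ω => (1 - lam * d ω) * w ω) μ :=
    hindep_noise.integrable_mul ((integrable_const 1).sub (hd.const_mul lam)) hw
  refine ((hsignal.const_mul lam).add hnoise).congr (.of_forall fun ω => ?_)
  simp only [Pi.add_apply]
  ring

lemma integral_relaxation_step (hd : Integrable d μ) (hq : Integrable q μ)
    (hw : Integrable w μ) (hdq : IndepFun d q μ)
    (hdqw : IndepFun (fun ω => (d ω, q ω)) w μ) (hq_mean : ∫ ω, q ω ∂μ = 0) :
    ∫ ω, lam * d ω * (x + q ω) + (1 - lam * d ω) * w ω ∂μ =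
      lam * (∫ ω, d ω ∂μ) * x + (1 - lam * ∫ ω, d ω ∂μ) * ∫ ω, w ω ∂μ := by
  have hindep_signal : IndepFun d (fun ω => x + q ω) μ :=
    hdq.comp measurable_id (measurable_const_add x)
  have hindep_noise : IndepFun (fun ω => 1 - lam * d ω) w μ :=
    hdqw.comp (φ := fun y : ℝ × ℝ => 1 - lam * y.1) (by fun_prop) measurable_id
  have hsignal_int : Integrable (fun ω => x + q ω) μ := (integrable_const x).add hq
  have hnoise_int : Integrable (fun ω => 1 - lam * d ω) μ :=
    (integrable_const 1).sub (hd.const_mul lam)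
  have hsignal_mean : ∫ ω, x + q ω ∂μ = x := by
    rw [integral_add (integrable_const x) hq, hq_mean]
    simp
  have hnoise_mean : ∫ ω, 1 - lam * d ω ∂μ = 1 - lam * ∫ ω, d ω ∂μ := by
    rw [integral_sub (integrable_const 1) (hd.const_mul lam), integral_const_mul]
    simp
  have hsignal : Integrable (fun ω => d ω * (x + q ω)) μ :=
    hindep_signal.integrable_mul hd hsignal_int
  have hnoise : Integrable (fun ω => (1 - lam * d ω) * w ω) μ :=
    hindep_noise.integrable_mul hnoise_int hw
  simp only [mul_assoc lam (d _)]
  rw [integral_add (hsignal.const_mul lam) hnoise, integral_const_mul,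
    hindep_signal.integral_fun_mul_eq_mul_integral hd.1 hsignal_int.1,
    hindep_noise.integral_fun_mul_eq_mul_integral hnoise_int.1 hw.1, hsignal_mean, hnoise_mean]
  ring

end RelaxationStep

lemma integral_sum_ofReal_mul {Ω ι : Type*} [MeasurableSpace Ω] [Fintype ι] {μ : Measure Ω}
    {f : ι → Ω → ℝ} (hf : ∀ i, Integrable (f i) μ) (c : ι → ℂ) :
    ∫ ω, ∑ i, (f i ω : ℂ) * c i ∂μ = ∑ i, ((∫ ω, f i ω ∂μ : ℝ) : ℂ) * c i := by
  refine (integral_finsetSum Finset.univ fun i _ => (hf i).ofReal.mul_const (c i)).trans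
    (Finset.sum_congr rfl fun i _ => ?_)
  rw [integral_mul_const]
  exact congrArg (· * c i) integral_ofReal

theorem imat_one_step_expectation_general
    {Ω : Type*} [MeasurableSpace Ω] (μ : Measure Ω) [IsProbabilityMeasure μ]
    (N : ℕ) (x : Fin N → ℝ) (p Δ lam : ℝ)
    (hp0 : 0 ≤ p)
    (d q w : Fin N → Ω → ℝ)
    (hd : ∀ n, Measurable (d n)) (hq : ∀ n, Measurable (q n))
    (hw : ∀ n, Integrable (w n) μ)
    (hlawd : ∀ n, Measure.map (d n) μ =
      ENNReal.ofReal (1 - p) • Measure.dirac (0 : ℝ) +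
      ENNReal.ofReal p • Measure.dirac (1 : ℝ))
    (hlawq : ∀ n, Measure.map (q n) μ =
      (1 / 2 : ENNReal) • Measure.dirac (Δ / 2) +
      (1 / 2 : ENNReal) • Measure.dirac (-(Δ / 2)))
    (hdq : ∀ n, IndepFun (d n) (q n) μ)
    (hdqw : ∀ n, IndepFun (fun ω => (d n ω, q n ω)) (w n) μ)
    (m : Fin N) :
    (∫ ω, ∑ n : Fin N,
        ((lam * d n ω * (x n + q n ω) + (1 - lam * d n ω) * w n ω : ℝ) : ℂ) *
          dftKernel N n m ∂μ) =
      ((lam * p : ℝ) : ℂ) * (∑ n : Fin N, (x n : ℂ) * dftKernel N n m) +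
      ((1 - lam * p : ℝ) : ℂ) * ∫ ω, ∑ n : Fin N, (w n ω : ℂ) * dftKernel N n m ∂μ := by
  have hd_int : ∀ n, Integrable (d n) μ := fun n =>
    integrable_of_map_eq_two_point (hd n).aemeasurable ENNReal.ofReal_ne_top
      ENNReal.ofReal_ne_top (hlawd n)
  have hq_int : ∀ n, Integrable (q n) μ := fun n =>
    integrable_of_map_eq_two_point (hq n).aemeasurable (by simp) (by simp) (hlawq n)
  have hd_mean : ∀ n, ∫ ω, d n ω ∂μ = p := fun n => by
    rw [integral_of_map_eq_two_point (hd n).aemeasurable ENNReal.ofReal_ne_top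
      ENNReal.ofReal_ne_top (hlawd n)]
    simp [hp0]
  have hq_mean : ∀ n, ∫ ω, q n ω ∂μ = 0 := fun n => by
    rw [integral_of_map_eq_two_point (hq n).aemeasurable (by simp) (by simp) (hlawq n)]
    ring
  rw [integral_sum_ofReal_mul fun n => integrable_relaxation_step (x n) lam (hd_int n)
      (hq_int n) (hw n) (hdq n) (hdqw n), integral_sum_ofReal_mul hw, Finset.mul_sum,
    Finset.mul_sum, ← Finset.sum_add_distrib]
  refine Finset.sum_congr rfl fun n _ => ?_
  rw [integral_relaxation_step (x n) lam (hd_int n) (hq_int n) (hw n) (hdq n) (hdqw n)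
    (hq_mean n), hd_mean n]
  push_cast
  ring

/-- One-step expectation recursion for the IMAT iteration:
with `z(n) = λ·d(n)·(x(n) + q(n)) + (1 − λ·d(n))·w(n)`, where `d(n) ~ Bernoulli(p)`,
`q(n) = ±Δ/2` equiprobable, `w(n)` integrable, `d(n)` independent of `q(n)` and the
pair `(d(n), q(n))` independent of `w(n)`, one has
`E[Z(m)] = λ·p·X(m) + (1 − λ·p)·E[W(m)]` for every frequency index `m`. -/
theorem imat_one_step_expectation
    {Ω : Type*} [MeasurableSpace Ω] (μ : Measure Ω) [IsProbabilityMeasure μ]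
    (N : ℕ) (hN : 0 < N) (x : Fin N → ℝ) (p Δ lam : ℝ)
    (hp0 : 0 ≤ p) (hp1 : p ≤ 1) (hΔ : 0 < Δ)
    (d q w : Fin N → Ω → ℝ)
    (hd : ∀ n, Measurable (d n)) (hq : ∀ n, Measurable (q n))
    (hw : ∀ n, Integrable (w n) μ)
    (hlawd : ∀ n, Measure.map (d n) μ =
      ENNReal.ofReal (1 - p) • Measure.dirac (0 : ℝ) +
      ENNReal.ofReal p • Measure.dirac (1 : ℝ))
    (hlawq : ∀ n, Measure.map (q n) μ =
      (1 / 2 : ENNReal) • Measure.dirac (Δ / 2) +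
      (1 / 2 : ENNReal) • Measure.dirac (-(Δ / 2)))
    (hdq : ∀ n, IndepFun (d n) (q n) μ)
    (hdqw : ∀ n, IndepFun (fun ω => (d n ω, q n ω)) (w n) μ)
    (m : Fin N) :
    (∫ ω, ∑ n : Fin N,
        ((lam * d n ω * (x n + q n ω) + (1 - lam * d n ω) * w n ω : ℝ) : ℂ) *
          dftKernel N n m ∂μ) =
      ((lam * p : ℝ) : ℂ) * (∑ n : Fin N, (x n : ℂ) * dftKernel N n m) +
      ((1 - lam * p : ℝ) : ℂ) * ∫ ω, ∑ n : Fin N, (w n ω : ℂ) * dftKernel N n m ∂μ :=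
  imat_one_step_expectation_general μ N x p Δ lam hp0 d q w hd hq hw hlawd hlawq hdq hdqw m
end

section
/- In the setting of the un-thresholded IMAT iteration with independent fresh masks (x_0 = 0, x_{k+1}(n) = λ·d_k(n)·(x(n) + q_k(n)) + (1 − λ·d_k(n))·x_k(n), with mutually independent d_k(n) ~ Bernoulli(p) and q_k(n) = ±Δ/2 equiprobable), assume 0 < p ≤ 1. Then the following are equivalent: (i) 0 < λ < 2/p; (ii) for every deterministic signal x : {0,…,N−1} → ℝ and every frequency index m, E[X_k(m)] → X(m) as k → ∞; that is, the IMAT iteration is an asymptotically unbiased estimator of X(m) exactly when 0 < λ < 2/p. -/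
open MeasureTheory ProbabilityTheory

lemma aux_ae_mem {Ω : Type*} [MeasurableSpace Ω] (μ : Measure Ω) (g : Ω → ℝ)
    (hg : Measurable g) (a b : ℝ) (c1 c2 : ENNReal)
    (hlaw : Measure.map g μ = c1 • Measure.dirac a + c2 • Measure.dirac b) :
    ∀ᵐ ω ∂μ, g ω = a ∨ g ω = b := by
  have hs : MeasurableSet ({a, b} : Set ℝ) :=
    (measurableSet_singleton a).union (measurableSet_singleton b)
  have h0 : μ (g ⁻¹' ({a, b} : Set ℝ)ᶜ) = 0 := by
    rw [← Measure.map_apply hg hs.compl, hlaw]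
    simp [Measure.dirac_apply' _ hs.compl, Set.indicator]
  rw [ae_iff]
  convert h0 using 2
  ext ω; simp

lemma aux_integral_law {Ω : Type*} [MeasurableSpace Ω] (μ : Measure Ω) (g : Ω → ℝ)
    (hg : Measurable g) (a b : ℝ) (c1 c2 : ENNReal) (h1 : c1 ≠ ⊤) (h2 : c2 ≠ ⊤)
    (hlaw : Measure.map g μ = c1 • Measure.dirac a + c2 • Measure.dirac b) :
    ∫ ω, g ω ∂μ = c1.toReal * a + c2.toReal * b := by
  have hid : ∀ c : ℝ, Integrable (fun x : ℝ => x) (Measure.dirac c) := fun c =>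
    (integrable_const c).congr (ae_eq_dirac (fun x : ℝ => x)).symm
  have h : ∫ ω, g ω ∂μ = ∫ x, x ∂(Measure.map g μ) :=
    (integral_map (μ := μ) hg.aemeasurable aestronglyMeasurable_id).symm
  rw [h, hlaw, integral_add_measure ((hid a).smul_measure h1) ((hid b).smul_measure h2),
    integral_smul_measure, integral_smul_measure, integral_dirac, integral_dirac]
  simp [smul_eq_mul]


/-- The un-thresholded IMAT iteration with fresh masks:
`x₀(n) = 0`, `x_{k+1}(n) = λ·d_k(n)·(x(n) + q_k(n)) + (1 − λ·d_k(n))·x_k(n)`. -/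
def imatIter {Ω : Type*} {N : ℕ} (lam : ℝ) (d q : ℕ → Fin N → Ω → ℝ)
    (x : Fin N → ℝ) : ℕ → Fin N → Ω → ℝ
  | 0 => fun _ _ => 0
  | k + 1 => fun n ω =>
      lam * d k n ω * (x n + q k n ω) + (1 - lam * d k n ω) * imatIter lam d q x k n ω

/-- For the un-thresholded IMAT iteration with independent
fresh masks (`d_k(n) ~ Bernoulli(p)`, `q_k(n) = ±Δ/2` equiprobable, all mutually
independent) and `0 < p ≤ 1`, the following are equivalent:
(i) `0 < λ < 2/p`;
(ii) for every deterministic signal `x` and every frequency index `m`,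
`E[X_k(m)] → X(m)` as `k → ∞` (asymptotic unbiasedness). -/
theorem imat_unbiased_iff_relaxation
    {Ω : Type*} [MeasurableSpace Ω] (μ : Measure Ω) [IsProbabilityMeasure μ]
    (N : ℕ) (hN : 0 < N) (p Δ lam : ℝ)
    (hp0 : 0 < p) (hp1 : p ≤ 1) (hΔ : 0 < Δ)
    (d q : ℕ → Fin N → Ω → ℝ)
    (hd : ∀ k n, Measurable (d k n)) (hq : ∀ k n, Measurable (q k n))
    (hindep : iIndepFun
      (Sum.elim (fun i : ℕ × Fin N => d i.1 i.2) (fun i : ℕ × Fin N => q i.1 i.2) :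
        (ℕ × Fin N) ⊕ (ℕ × Fin N) → Ω → ℝ) μ)
    (hlawd : ∀ k n, Measure.map (d k n) μ =
      ENNReal.ofReal (1 - p) • Measure.dirac (0 : ℝ) +
      ENNReal.ofReal p • Measure.dirac (1 : ℝ))
    (hlawq : ∀ k n, Measure.map (q k n) μ =
      (1 / 2 : ENNReal) • Measure.dirac (Δ / 2) +
      (1 / 2 : ENNReal) • Measure.dirac (-(Δ / 2))) :
    (0 < lam ∧ lam < 2 / p) ↔
      (∀ (x : Fin N → ℝ) (m : Fin N),
        Filter.Tendsto
          (fun k => ∫ ω, ∑ n : Fin N,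
            ((imatIter lam d q x k n ω : ℝ) : ℂ) * dftKernel N n m ∂μ)
          Filter.atTop
          (nhds (∑ n : Fin N, (x n : ℂ) * dftKernel N n m))) := by
  classical
  set f : (ℕ × Fin N) ⊕ (ℕ × Fin N) → Ω → ℝ :=
    Sum.elim (fun i : ℕ × Fin N => d i.1 i.2) (fun i : ℕ × Fin N => q i.1 i.2) with hf
  have hfmeas : ∀ i, Measurable (f i) := by
    rintro (⟨k, n⟩ | ⟨k, n⟩)
    · exact hd k n
    · exact hq k n
  -- a.e. values and bounds
  have hdae : ∀ k n, ∀ᵐ ω ∂μ, d k n ω = 0 ∨ d k n ω = 1 := fun k n =>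
    aux_ae_mem μ _ (hd k n) _ _ _ _ (hlawd k n)
  have hqae : ∀ k n, ∀ᵐ ω ∂μ, q k n ω = Δ / 2 ∨ q k n ω = -(Δ / 2) := fun k n =>
    aux_ae_mem μ _ (hq k n) _ _ _ _ (hlawq k n)
  have hdbd : ∀ k n, ∀ᵐ ω ∂μ, |d k n ω| ≤ 1 := fun k n =>
    (hdae k n).mono (by rintro ω (h | h) <;> rw [h] <;> norm_num)
  have hqbd : ∀ k n, ∀ᵐ ω ∂μ, |q k n ω| ≤ Δ / 2 := fun k n =>
    (hqae k n).mono (by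
      rintro ω (h | h) <;> rw [h]
      · rw [abs_of_nonneg (by linarith)]
      · rw [abs_neg, abs_of_nonneg (by linarith)])
  -- measurability of iterates
  have hXmeas : ∀ (x : Fin N → ℝ) (k : ℕ) (n : Fin N),
      Measurable (fun ω => imatIter lam d q x k n ω) := by
    intro x k
    induction k with
    | zero => intro n; simpa [imatIter] using (measurable_const : Measurable fun _ : Ω => (0:ℝ))
    | succ k ih =>
      intro n
      simp only [imatIter]
      exact ((measurable_const.mul (hd k n)).mul (measurable_const.add (hq k n))).add
        ((measurable_const.sub (measurable_const.mul (hd k n))).mul (ih n))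
  -- a.e. bounds on iterates
  have hXbd : ∀ (x : Fin N → ℝ) (k : ℕ) (n : Fin N),
      ∃ C : ℝ, ∀ᵐ ω ∂μ, |imatIter lam d q x k n ω| ≤ C := by
    intro x k
    induction k with
    | zero => intro n; exact ⟨0, Filter.Eventually.of_forall fun ω => by simp [imatIter]⟩
    | succ k ih =>
      intro n
      obtain ⟨C, hC⟩ := ih n
      refine ⟨|lam| * (|x n| + Δ / 2) + (1 + |lam|) * C, ?_⟩
      filter_upwards [hC, hdbd k n, hqbd k n] with ω h1 h2 h3
      simp only [imatIter]
      have e1 : |lam * d k n ω| ≤ |lam| := by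
        rw [abs_mul]
        nlinarith [abs_nonneg lam, abs_nonneg (d k n ω)]
      have e2 : |x n + q k n ω| ≤ |x n| + Δ / 2 :=
        (abs_add_le _ _).trans (by linarith)
      have e3 : |1 - lam * d k n ω| ≤ 1 + |lam| := by
        have := abs_le.mp e1
        rw [abs_le]
        constructor <;> nlinarith [abs_nonneg lam]
      calc |lam * d k n ω * (x n + q k n ω) + (1 - lam * d k n ω) * imatIter lam d q x k n ω|
          ≤ |lam * d k n ω| * |x n + q k n ω| + |1 - lam * d k n ω| * |imatIter lam d q x k n ω| := by
            rw [← abs_mul, ← abs_mul]; exact abs_add_le _ _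
        _ ≤ |lam| * (|x n| + Δ / 2) + (1 + |lam|) * C := by
            have h6 : (0:ℝ) ≤ |lam| := abs_nonneg lam
            exact add_le_add (mul_le_mul e1 e2 (abs_nonneg _) h6)
              (mul_le_mul e3 h1 (abs_nonneg _) (by linarith))
  -- integrability
  have hXint : ∀ x k n, Integrable (fun ω => imatIter lam d q x k n ω) μ := by
    intro x k n
    obtain ⟨C, hC⟩ := hXbd x k n
    exact (integrable_const C).mono' (hXmeas x k n).aestronglyMeasurable
      (by simpa [Real.norm_eq_abs] using hC)
  have hDint : ∀ k n, Integrable (d k n) μ := fun k n =>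
    (integrable_const 1).mono' (hd k n).aestronglyMeasurable
      (by simpa [Real.norm_eq_abs] using hdbd k n)
  have hQint : ∀ k n, Integrable (q k n) μ := fun k n =>
    (integrable_const (Δ / 2)).mono' (hq k n).aestronglyMeasurable
      (by simpa [Real.norm_eq_abs] using hqbd k n)
  have hDQint : ∀ k n, Integrable (fun ω => d k n ω * q k n ω) μ := by
    intro k n
    refine (integrable_const (Δ / 2)).mono' ((hd k n).mul (hq k n)).aestronglyMeasurable ?_
    filter_upwards [hdbd k n, hqbd k n] with ω h1 h2
    rw [Real.norm_eq_abs, abs_mul]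
    exact le_trans (mul_le_of_le_one_left (abs_nonneg _) h1) h2
  have hDXint : ∀ x k n, Integrable (fun ω => d k n ω * imatIter lam d q x k n ω) μ := by
    intro x k n
    obtain ⟨C, hC⟩ := hXbd x k n
    refine (integrable_const C).mono' ((hd k n).mul (hXmeas x k n)).aestronglyMeasurable ?_
    filter_upwards [hdbd k n, hC] with ω h1 h2
    rw [Real.norm_eq_abs, abs_mul]
    exact le_trans (mul_le_of_le_one_left (abs_nonneg _) h1) h2
  -- factorization of iterates through past coordinates
  set T : ℕ → Finset ((ℕ × Fin N) ⊕ (ℕ × Fin N)) := fun k =>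
    ((Finset.range k ×ˢ (Finset.univ : Finset (Fin N))).image Sum.inl) ∪
    ((Finset.range k ×ˢ (Finset.univ : Finset (Fin N))).image Sum.inr) with hT
  have hfact : ∀ (x : Fin N → ℝ) (k : ℕ) (n : Fin N),
      ∃ G : ({ i : (ℕ × Fin N) ⊕ (ℕ × Fin N) // i ∈ T k } → ℝ) → ℝ, Measurable G ∧
        ∀ ω, imatIter lam d q x k n ω = G (fun i => f i.1 ω) := by
    intro x k
    induction k with
    | zero => intro n; exact ⟨fun _ => 0, measurable_const, fun ω => by simp [imatIter]⟩
    | succ k ih =>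
      intro n
      obtain ⟨G, hG, hGeq⟩ := ih n
      have hsub : T k ⊆ T (k + 1) := by
        apply Finset.union_subset_union <;> apply Finset.image_subset_image <;>
          exact Finset.product_subset_product (Finset.range_subset_range.mpr (Nat.le_succ k))
            subset_rfl
      have hm1 : (Sum.inl (k, n) : (ℕ × Fin N) ⊕ (ℕ × Fin N)) ∈ T (k + 1) :=
        Finset.mem_union_left _ (Finset.mem_image_of_mem _ (by simp))
      have hm2 : (Sum.inr (k, n) : (ℕ × Fin N) ⊕ (ℕ × Fin N)) ∈ T (k + 1) :=
        Finset.mem_union_right _ (Finset.mem_image_of_mem _ (by simp))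
      refine ⟨fun v => lam * v ⟨Sum.inl (k, n), hm1⟩ * (x n + v ⟨Sum.inr (k, n), hm2⟩) +
        (1 - lam * v ⟨Sum.inl (k, n), hm1⟩) *
          G (fun j => v ⟨j.1, hsub j.2⟩), ?_, ?_⟩
      · have m1 : Measurable fun v : { i : (ℕ × Fin N) ⊕ (ℕ × Fin N) // i ∈ T (k + 1) } → ℝ =>
            v ⟨Sum.inl (k, n), hm1⟩ := measurable_pi_apply _
        have m2 : Measurable fun v : { i : (ℕ × Fin N) ⊕ (ℕ × Fin N) // i ∈ T (k + 1) } → ℝ =>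
            v ⟨Sum.inr (k, n), hm2⟩ := measurable_pi_apply _
        have m3 : Measurable fun v : { i : (ℕ × Fin N) ⊕ (ℕ × Fin N) // i ∈ T (k + 1) } → ℝ =>
            G (fun j => v ⟨j.1, hsub j.2⟩) :=
          hG.comp (measurable_pi_lambda _ fun j => measurable_pi_apply _)
        exact ((measurable_const.mul m1).mul (measurable_const.add m2)).add
          ((measurable_const.sub (measurable_const.mul m1)).mul m3)
      · intro ω
        simp only [imatIter]
        rw [hGeq ω]
        rfl
  -- independence of the fresh mask from the current iterate
  have hindepDX : ∀ (x : Fin N → ℝ) (k : ℕ) (n : Fin N),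
      IndepFun (d k n) (fun ω => imatIter lam d q x k n ω) μ := by
    intro x k n
    obtain ⟨G, hG, hGeq⟩ := hfact x k n
    have hdisj : Disjoint {(Sum.inl (k, n) : (ℕ × Fin N) ⊕ (ℕ × Fin N))} (T k) := by
      rw [Finset.disjoint_singleton_left]
      simp only [hT, Finset.mem_union, Finset.mem_image, Finset.mem_product, Finset.mem_range,
        not_or, not_exists, not_and]
      constructor
      · rintro ⟨a, b⟩ ⟨ha, -⟩ h
        rw [Sum.inl.injEq, Prod.mk.injEq] at h
        omega
      · rintro ⟨a, b⟩ - h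
        exact absurd h (by simp)
    have h1 := (hindep.indepFun_finset {Sum.inl (k, n)} (T k) hdisj hfmeas).comp
      (measurable_pi_apply
        (⟨Sum.inl (k, n), Finset.mem_singleton_self _⟩ :
          ({Sum.inl (k, n)} : Finset ((ℕ × Fin N) ⊕ (ℕ × Fin N))))) hG
    have e2 : (fun ω => imatIter lam d q x k n ω) =
        (G ∘ fun ω (i : { i : (ℕ × Fin N) ⊕ (ℕ × Fin N) // i ∈ T k }) =>
          f i.1 ω) := funext fun ω => hGeq ω
    rw [e2]
    exact h1
  have hindepDQ : ∀ k n, IndepFun (d k n) (q k n) μ := by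
    intro k n
    exact hindep.indepFun (by simp : (Sum.inl (k, n) : (ℕ × Fin N) ⊕ (ℕ × Fin N)) ≠ Sum.inr (k, n))
  -- expectations
  have hEd : ∀ k n, ∫ ω, d k n ω ∂μ = p := by
    intro k n
    rw [aux_integral_law μ _ (hd k n) _ _ _ _ ENNReal.ofReal_ne_top ENNReal.ofReal_ne_top
      (hlawd k n), ENNReal.toReal_ofReal (by linarith), ENNReal.toReal_ofReal hp0.le]
    ring
  have hEq : ∀ k n, ∫ ω, q k n ω ∂μ = 0 := by
    intro k n
    rw [aux_integral_law μ _ (hq k n) _ _ _ _ (by simp) (by simp) (hlawq k n)]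
    norm_num
  have hEdq : ∀ k n, ∫ ω, d k n ω * q k n ω ∂μ = 0 := by
    intro k n
    have h2 : ∫ ω, d k n ω * q k n ω ∂μ = (∫ ω, d k n ω ∂μ) * ∫ ω, q k n ω ∂μ :=
      (hindepDQ k n).integral_fun_mul_eq_mul_integral (hDint k n).1 (hQint k n).1
    rw [h2, hEq k n, mul_zero]
  have hEdX : ∀ x k n, ∫ ω, d k n ω * imatIter lam d q x k n ω ∂μ
      = p * ∫ ω, imatIter lam d q x k n ω ∂μ := by
    intro x k n
    have h2 : ∫ ω, d k n ω * imatIter lam d q x k n ω ∂μ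
        = (∫ ω, d k n ω ∂μ) * ∫ ω, imatIter lam d q x k n ω ∂μ :=
      (hindepDX x k n).integral_fun_mul_eq_mul_integral (hDint k n).1 (hXint x k n).1
    rw [h2, hEd k n]
  -- the expectation recursion
  have hEX : ∀ x k n, ∫ ω, imatIter lam d q x k n ω ∂μ = (1 - (1 - lam * p) ^ k) * x n := by
    intro x k
    induction k with
    | zero => intro n; simp [imatIter]
    | succ k ih =>
      intro n
      have I1 : Integrable (fun ω => (lam * x n) * d k n ω) μ := (hDint k n).const_mul _
      have I2 : Integrable (fun ω => lam * (d k n ω * q k n ω)) μ := (hDQint k n).const_mul _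
      have I3 := hXint x k n
      have I4 : Integrable (fun ω => (-lam) * (d k n ω * imatIter lam d q x k n ω)) μ :=
        (hDXint x k n).const_mul _
      have I12 : Integrable (fun ω => (lam * x n) * d k n ω + lam * (d k n ω * q k n ω)) μ :=
        I1.add I2
      have I34 : Integrable (fun ω => imatIter lam d q x k n ω +
          (-lam) * (d k n ω * imatIter lam d q x k n ω)) μ := I3.add I4
      have hrw : (fun ω => imatIter lam d q x (k + 1) n ω) = fun ω =>
          (lam * x n) * d k n ω + lam * (d k n ω * q k n ω) +
          (imatIter lam d q x k n ω + (-lam) * (d k n ω * imatIter lam d q x k n ω)) := by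
        funext ω
        simp only [imatIter]
        ring
      rw [hrw, integral_add I12 I34, integral_add I1 I2, integral_add I3 I4,
        integral_const_mul, integral_const_mul, integral_const_mul, hEd k n, hEdq k n,
        hEdX x k n, ih n]
      ring
  -- the complex-valued expectation
  have hcomp : ∀ (x : Fin N → ℝ) (m : Fin N) (k : ℕ),
      (∫ ω, ∑ n : Fin N, ((imatIter lam d q x k n ω : ℝ) : ℂ) * dftKernel N n m ∂μ)
        = (1 - ((1 - lam * p : ℝ) : ℂ) ^ k) * ∑ n : Fin N, (x n : ℂ) * dftKernel N n m := by
    intro x m k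
    have hint : ∀ n ∈ (Finset.univ : Finset (Fin N)),
        Integrable (fun ω => ((imatIter lam d q x k n ω : ℝ) : ℂ) * dftKernel N n m) μ :=
      fun n _ => (hXint x k n).ofReal.mul_const (dftKernel N n m)
    rw [integral_finset_sum Finset.univ hint]
    have hterm : ∀ n : Fin N,
        (∫ ω, ((imatIter lam d q x k n ω : ℝ) : ℂ) * dftKernel N n m ∂μ)
          = (((1 - (1 - lam * p) ^ k) * x n : ℝ) : ℂ) * dftKernel N n m := by
      intro n
      rw [integral_mul_const]
      have hre : (∫ ω, ((imatIter lam d q x k n ω : ℝ) : ℂ) ∂μ)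
          = ((∫ ω, imatIter lam d q x k n ω ∂μ : ℝ) : ℂ) := integral_ofReal
      rw [hre, hEX x k n]
    rw [Finset.sum_congr rfl fun n _ => hterm n, Finset.mul_sum]
    refine Finset.sum_congr rfl fun n _ => ?_
    push_cast
    ring
  constructor
  · rintro ⟨h1, h2⟩ x m
    have hlp2 : lam * p < 2 := (lt_div_iff₀ hp0).mp h2
    have hlp0 : 0 < lam * p := mul_pos h1 hp0
    have habs : ‖((1 - lam * p : ℝ) : ℂ)‖ < 1 := by
      rw [Complex.norm_real, Real.norm_eq_abs, abs_lt]
      constructor <;> linarith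
    have hpow := tendsto_pow_atTop_nhds_zero_of_norm_lt_one habs
    have hlim := ((tendsto_const_nhds :
        Filter.Tendsto (fun _ : ℕ => (1 : ℂ)) Filter.atTop (nhds 1)).sub hpow).mul
      (tendsto_const_nhds :
        Filter.Tendsto (fun _ : ℕ => ∑ n : Fin N, (x n : ℂ) * dftKernel N n m)
          Filter.atTop (nhds (∑ n : Fin N, (x n : ℂ) * dftKernel N n m)))
    simp only [sub_zero, one_mul] at hlim
    exact hlim.congr fun k => (hcomp x m k).symm
  · intro h
    set i0 : Fin N := ⟨0, hN⟩ with hi0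
    have hK : dftKernel N i0 i0 = 1 := by
      simp [dftKernel, hi0]
    have hS : (∑ n : Fin N, (((Pi.single i0 (1 : ℝ) : Fin N → ℝ) n : ℝ) : ℂ) * dftKernel N n i0) = 1 := by
      rw [Finset.sum_eq_single i0]
      · rw [Pi.single_eq_same, hK]; norm_num
      · intro b _ hb; rw [Pi.single_eq_of_ne hb]; simp
      · intro hmem; exact absurd (Finset.mem_univ i0) hmem
    have ht := h (Pi.single i0 1) i0
    rw [hS] at ht
    have ht2 : Filter.Tendsto (fun k => (1 - ((1 - lam * p : ℝ) : ℂ) ^ k) * 1)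
        Filter.atTop (nhds 1) :=
      ht.congr fun k => by rw [hcomp (Pi.single i0 1) i0 k, hS]
    have hpow : Filter.Tendsto (fun k => ((1 - lam * p : ℝ) : ℂ) ^ k) Filter.atTop (nhds 0) := by
      have h3 := ((tendsto_const_nhds :
        Filter.Tendsto (fun _ : ℕ => (1 : ℂ)) Filter.atTop (nhds 1))).sub ht2
      simp only [mul_one, sub_sub_cancel, sub_self] at h3
      exact h3
    have hnorm := hpow.norm
    simp only [norm_pow, Complex.norm_real, Real.norm_eq_abs, norm_zero] at hnorm
    have habs : |1 - lam * p| < 1 := by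
      have h4 := tendsto_pow_atTop_nhds_zero_iff.mp hnorm
      rwa [abs_abs] at h4
    rw [abs_lt] at habs
    obtain ⟨hb1, hb2⟩ := habs
    constructor
    · by_contra hcon
      push_neg at hcon
      nlinarith
    · rw [lt_div_iff₀ hp0]
      linarith
end

section
/- Let P, r, s : {0,…,N−1} → ℝ be deterministic signals with Σ_{n=0}^{N−1} r(n)·s(n) = 0, and define the random signal x'(n) = P(n) + s(n) + λ·d(n)·(q(n) + r(n) − s(n)), where d(0),…,d(N−1), q(0),…,q(N−1) are mutually independent, each d(n) is Bernoulli(p) and each q(n) takes values Δ/2 and −Δ/2 with probability 1/2 each, and λ ∈ ℝ. Then for every frequency index m, the spectrum variance satisfies E[|X'(m) − E[X'(m)]|²] = λ²·(p − p²)·(ε_r + ε_s) + λ²·p·N·Δ²/4, where ε_r = Σ_{n=0}^{N−1} r(n)² and ε_s = Σ_{n=0}^{N−1} s(n)², and X'(m) = Σ_{n=0}^{N−1} x'(n) e^{−2πi nm/N}. -/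
set_option linter.unusedSectionVars false
set_option maxHeartbeats 2000000

open MeasureTheory ProbabilityTheory

section Aux
variable {Ω : Type*} [MeasurableSpace Ω] {μ : Measure Ω} [IsProbabilityMeasure μ]

lemma integrable_dirac'' {f : ℝ → ℝ} (hf : Measurable f) (x : ℝ) :
    Integrable f (Measure.dirac x) :=
  ⟨hf.aestronglyMeasurable, by
    rw [HasFiniteIntegral, lintegral_dirac]; exact ENNReal.coe_lt_top⟩

lemma integral_two_point {X : Ω → ℝ} (hX : Measurable X)
    {c1 c2 : ENNReal} (h1 : c1 ≠ ⊤) (h2 : c2 ≠ ⊤) {x1 x2 : ℝ}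
    (hlaw : Measure.map X μ = c1 • Measure.dirac x1 + c2 • Measure.dirac x2)
    {f : ℝ → ℝ} (hf : Measurable f) :
    ∫ ω, f (X ω) ∂μ = c1.toReal * f x1 + c2.toReal * f x2 := by
  rw [← integral_map hX.aemeasurable hf.aestronglyMeasurable, hlaw,
    integral_add_measure (((integrable_dirac'' hf x1).smul_measure h1))
      (((integrable_dirac'' hf x2).smul_measure h2)),
    integral_smul_measure, integral_smul_measure, integral_dirac, integral_dirac,
    smul_eq_mul, smul_eq_mul]

lemma ae_two_point {X : Ω → ℝ} (hX : Measurable X)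
    {c1 c2 : ENNReal} {x1 x2 : ℝ}
    (hlaw : Measure.map X μ = c1 • Measure.dirac x1 + c2 • Measure.dirac x2) :
    ∀ᵐ ω ∂μ, X ω = x1 ∨ X ω = x2 := by
  have hs : MeasurableSet ({x1, x2} : Set ℝ) := by measurability
  have h0 : μ (X ⁻¹' ({x1, x2} : Set ℝ)ᶜ) = 0 := by
    rw [← Measure.map_apply hX hs.compl, hlaw]
    simp [Measure.dirac_apply' _ hs.compl, Set.indicator_of_notMem]
  filter_upwards [measure_eq_zero_iff_ae_notMem.mp h0] with ω hω
  exact or_iff_not_imp_left.mpr (by simpa [Set.mem_insert_iff] using hω)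

lemma integrable_of_ae_bound {f : Ω → ℝ} (hf : AEStronglyMeasurable f μ)
    {C : ℝ} (h : ∀ᵐ ω ∂μ, |f ω| ≤ C) : Integrable f μ :=
  (integrable_const C).mono' hf (by filter_upwards [h] with ω hω; simpa using hω)

end Aux

/-- Spectrum variance of one IMAT step. Let `P, r, s` be
deterministic signals with `Σ r(n)·s(n) = 0`, and let
`x'(n) = P(n) + s(n) + λ·d(n)·(q(n) + r(n) − s(n))` with mutually independent
`d(n) ~ Bernoulli(p)` and `q(n) = ±Δ/2` equiprobable. Then for every frequency
index `m`, `E[|X'(m) − E[X'(m)]|²] = λ²·(p − p²)·(ε_r + ε_s) + λ²·p·N·Δ²/4`,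
where `ε_r = Σ r(n)²` and `ε_s = Σ s(n)²`. -/
theorem imat_step_spectrum_variance
    {Ω : Type*} [MeasurableSpace Ω] (μ : Measure Ω) [IsProbabilityMeasure μ]
    (N : ℕ) (hN : 0 < N) (P r s : Fin N → ℝ) (p Δ lam : ℝ)
    (hp0 : 0 ≤ p) (hp1 : p ≤ 1) (hΔ : 0 < Δ)
    (horth : ∑ n : Fin N, r n * s n = 0)
    (d q : Fin N → Ω → ℝ)
    (hd : ∀ n, Measurable (d n)) (hq : ∀ n, Measurable (q n))
    (hindep : iIndepFun (Sum.elim d q : Fin N ⊕ Fin N → Ω → ℝ) μ)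
    (hlawd : ∀ n, Measure.map (d n) μ =
      ENNReal.ofReal (1 - p) • Measure.dirac (0 : ℝ) +
      ENNReal.ofReal p • Measure.dirac (1 : ℝ))
    (hlawq : ∀ n, Measure.map (q n) μ =
      (1 / 2 : ENNReal) • Measure.dirac (Δ / 2) +
      (1 / 2 : ENNReal) • Measure.dirac (-(Δ / 2)))
    (m : Fin N) :
    (∫ ω, ‖
        (∑ n : Fin N,
          ((P n + s n + lam * d n ω * (q n ω + r n - s n) : ℝ) : ℂ) * dftKernel N n m) -
         ∫ ω', ∑ n : Fin N,
          ((P n + s n + lam * d n ω' * (q n ω' + r n - s n) : ℝ) : ℂ) * dftKernel N n m ∂μ‖ ^ 2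
      ∂μ) =
      lam ^ 2 * (p - p ^ 2) * ((∑ n : Fin N, (r n) ^ 2) + (∑ n : Fin N, (s n) ^ 2)) +
        lam ^ 2 * p * N * Δ ^ 2 / 4 := by
  classical
  set a : Fin N → ℝ := fun n => r n - s n with ha
  set Y : Fin N → Ω → ℝ := fun n ω => d n ω * (q n ω + a n) with hY
  have hne1 : ENNReal.ofReal (1 - p) ≠ ⊤ := ENNReal.ofReal_ne_top
  have hne2 : ENNReal.ofReal p ≠ ⊤ := ENNReal.ofReal_ne_top
  have hne3 : (1 / 2 : ENNReal) ≠ ⊤ := by simp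
  have ht1 : (ENNReal.ofReal (1 - p)).toReal = 1 - p :=
    ENNReal.toReal_ofReal (by linarith)
  have ht2 : (ENNReal.ofReal p).toReal = p := ENNReal.toReal_ofReal hp0
  have ht3 : (1 / 2 : ENNReal).toReal = 1 / 2 := by simp
  -- moments of d and q
  have hdmom : ∀ n, ∫ ω, d n ω ∂μ = p := by
    intro n
    have := integral_two_point (μ := μ) (hd n) hne1 hne2 (hlawd n) measurable_id
    simpa [ht1, ht2] using this
  have hd2mom : ∀ n, ∫ ω, (d n ω) ^ 2 ∂μ = p := by
    intro n
    have := integral_two_point (μ := μ) (hd n) hne1 hne2 (hlawd n)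
      (f := fun x => x ^ 2) (by fun_prop)
    simpa [ht1, ht2] using this
  have hqmom : ∀ n, ∫ ω, q n ω ∂μ = 0 := by
    intro n
    have := integral_two_point (μ := μ) (hq n) hne3 hne3 (hlawq n) measurable_id
    simp only [ht3, id] at this
    rw [this]; ring
  have hq2mom : ∀ n, ∫ ω, (q n ω) ^ 2 ∂μ = Δ ^ 2 / 4 := by
    intro n
    have := integral_two_point (μ := μ) (hq n) hne3 hne3 (hlawq n)
      (f := fun x => x ^ 2) (by fun_prop)
    simp only [ht3] at this
    rw [this]; ring
  -- a.e. bounds and integrability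
  have hdb : ∀ n, ∀ᵐ ω ∂μ, |d n ω| ≤ 1 := by
    intro n
    filter_upwards [ae_two_point (hd n) (hlawd n)] with ω hω
    rcases hω with h | h <;> rw [h] <;> norm_num
  have hqb : ∀ n, ∀ᵐ ω ∂μ, |q n ω| ≤ Δ / 2 := by
    intro n
    filter_upwards [ae_two_point (hq n) (hlawq n)] with ω hω
    rcases hω with h | h <;> rw [h, abs_le] <;> constructor <;> linarith
  have hdint : ∀ n, Integrable (d n) μ := fun n =>
    integrable_of_ae_bound (hd n).aestronglyMeasurable (hdb n)
  have hqint : ∀ n, Integrable (q n) μ := fun n =>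
    integrable_of_ae_bound (hq n).aestronglyMeasurable (hqb n)
  have hYmeas : ∀ n, Measurable (Y n) := fun n => (hd n).mul ((hq n).add_const _)
  have hYb : ∀ n, ∀ᵐ ω ∂μ, |Y n ω| ≤ Δ / 2 + |a n| := by
    intro n
    filter_upwards [hdb n, hqb n] with ω h1 h2
    calc |Y n ω| = |d n ω| * |q n ω + a n| := abs_mul _ _
    _ ≤ 1 * (Δ / 2 + |a n|) :=
        mul_le_mul h1 ((abs_add_le _ _).trans (by linarith)) (abs_nonneg _) zero_le_one
    _ = Δ / 2 + |a n| := one_mul _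
  have hYint : ∀ n, Integrable (Y n) μ := fun n =>
    integrable_of_ae_bound (hYmeas n).aestronglyMeasurable (hYb n)
  -- centered variables
  set w : Fin N → Ω → ℝ := fun n ω => Y n ω - p * a n with hw
  have hwmeas : ∀ n, Measurable (w n) := fun n => (hYmeas n).sub_const _
  have hwb : ∀ n, ∀ᵐ ω ∂μ, |w n ω| ≤ Δ / 2 + |a n| + |p * a n| := by
    intro n
    filter_upwards [hYb n] with ω h1
    calc |w n ω| ≤ |Y n ω| + |p * a n| := abs_sub _ _
    _ ≤ Δ / 2 + |a n| + |p * a n| := by linarith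
  have hwint : ∀ n, Integrable (w n) μ := fun n =>
    integrable_of_ae_bound (hwmeas n).aestronglyMeasurable (hwb n)
  have hwwint : ∀ n n', Integrable (fun ω => w n ω * w n' ω) μ := by
    intro n n'
    refine integrable_of_ae_bound ((hwmeas n).mul (hwmeas n')).aestronglyMeasurable
      (C := (Δ / 2 + |a n| + |p * a n|) * (Δ / 2 + |a n'| + |p * a n'|)) ?_
    filter_upwards [hwb n, hwb n'] with ω h1 h2
    rw [abs_mul]
    exact mul_le_mul h1 h2 (abs_nonneg _) (le_trans (abs_nonneg _) h1)
  -- independence facts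
  have hSmeas : ∀ i : Fin N ⊕ Fin N, Measurable (Sum.elim d q i) := by
    rintro (n | n); exacts [hd n, hq n]
  have hdq_ind : ∀ n, IndepFun (d n) (q n) μ :=
    fun n => hindep.indepFun (i := Sum.inl n) (j := Sum.inr n) (by simp)
  -- mean of Y
  have hYmean : ∀ n, ∫ ω, Y n ω ∂μ = p * a n := by
    intro n
    have h1 : IndepFun (d n) (fun ω => q n ω + a n) μ :=
      (hdq_ind n).comp measurable_id (measurable_add_const (a n))
    have hqaint : Integrable (fun ω => q n ω + a n) μ := (hqint n).add (integrable_const _)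
    have hmul := h1.integral_fun_mul_eq_mul_integral (hdint n).aestronglyMeasurable hqaint.aestronglyMeasurable
    have h2 : ∫ ω, q n ω + a n ∂μ = a n := by
      rw [integral_add (hqint n) (integrable_const _), hqmom n]; simp
    calc ∫ ω, Y n ω ∂μ = ∫ ω, d n ω * (q n ω + a n) ∂μ := rfl
    _ = (∫ ω, d n ω ∂μ) * ∫ ω, q n ω + a n ∂μ := hmul
    _ = p * a n := by rw [hdmom n, h2]
  -- second moment of Y
  have hq2int : ∀ n, Integrable (fun ω => (q n ω) ^ 2) μ := by
    intro n
    refine integrable_of_ae_bound ((hq n).pow_const 2).aestronglyMeasurable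
      (C := (Δ / 2) ^ 2) ?_
    filter_upwards [hqb n] with ω h3
    rw [abs_pow]
    exact pow_le_pow_left₀ (abs_nonneg _) h3 2
  have hY2mom : ∀ n, ∫ ω, (Y n ω) ^ 2 ∂μ = p * (Δ ^ 2 / 4 + (a n) ^ 2) := by
    intro n
    have h1 : IndepFun (fun ω => (d n ω) ^ 2) (fun ω => (q n ω + a n) ^ 2) μ :=
      (hdq_ind n).comp (measurable_id.pow_const 2)
        ((measurable_add_const (a n)).pow_const 2)
    have hqa2int : Integrable (fun ω => (q n ω + a n) ^ 2) μ := by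
      refine integrable_of_ae_bound (((hq n).add_const _).pow_const 2).aestronglyMeasurable
        (C := (Δ / 2 + |a n|) ^ 2) ?_
      filter_upwards [hqb n] with ω h2
      rw [abs_pow]
      exact pow_le_pow_left₀ (abs_nonneg _) ((abs_add_le _ _).trans (by linarith)) 2
    have hd2int : Integrable (fun ω => (d n ω) ^ 2) μ := by
      refine integrable_of_ae_bound ((hd n).pow_const 2).aestronglyMeasurable (C := 1) ?_
      filter_upwards [hdb n] with ω h2
      rw [abs_pow]
      exact pow_le_one₀ (abs_nonneg _) h2
    have hmul := h1.integral_fun_mul_eq_mul_integral hd2int.aestronglyMeasurable hqa2int.aestronglyMeasurable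
    have h2 : ∫ ω, (q n ω + a n) ^ 2 ∂μ = Δ ^ 2 / 4 + (a n) ^ 2 := by
      have hexp : (fun ω => (q n ω + a n) ^ 2)
          = fun ω => (q n ω) ^ 2 + (2 * a n) * q n ω + (a n) ^ 2 :=
        funext fun ω => by ring
      have i1 : Integrable (fun ω => q n ω ^ 2 + (2 * a n) * q n ω) μ :=
        (hq2int n).add ((hqint n).const_mul _)
      rw [hexp, integral_add i1 (integrable_const _),
        integral_add (hq2int n) ((hqint n).const_mul _), integral_const_mul, hq2mom n,
        hqmom n, integral_const]
      simp
    have hY2eq : (fun ω => (Y n ω) ^ 2) = fun ω => (d n ω) ^ 2 * (q n ω + a n) ^ 2 :=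
      funext fun ω => by simp only [hY]; ring
    calc ∫ ω, (Y n ω) ^ 2 ∂μ = ∫ ω, (d n ω) ^ 2 * (q n ω + a n) ^ 2 ∂μ := by rw [hY2eq]
    _ = (∫ ω, (d n ω) ^ 2 ∂μ) * ∫ ω, (q n ω + a n) ^ 2 ∂μ := hmul
    _ = p * (Δ ^ 2 / 4 + (a n) ^ 2) := by rw [hd2mom n, h2]
  -- variance of Y
  have hY2int : ∀ n, Integrable (fun ω => (Y n ω) ^ 2) μ := by
    intro n
    refine integrable_of_ae_bound ((hYmeas n).pow_const 2).aestronglyMeasurable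
      (C := (Δ / 2 + |a n|) ^ 2) ?_
    filter_upwards [hYb n] with ω h2
    rw [abs_pow]
    exact pow_le_pow_left₀ (abs_nonneg _) h2 2
  have hVar : ∀ n, ∫ ω, w n ω * w n ω ∂μ = p * Δ ^ 2 / 4 + (p - p ^ 2) * (a n) ^ 2 := by
    intro n
    have hexp : (fun ω => w n ω * w n ω)
        = fun ω => (Y n ω) ^ 2 - (2 * (p * a n)) * Y n ω + (p * a n) ^ 2 :=
      funext fun ω => by simp only [hw]; ring
    have i1 : Integrable (fun ω => Y n ω ^ 2 - (2 * (p * a n)) * Y n ω) μ :=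
      (hY2int n).sub ((hYint n).const_mul _)
    rw [hexp, integral_add i1 (integrable_const _),
      integral_sub (hY2int n) ((hYint n).const_mul _), integral_const_mul, hY2mom n,
      hYmean n, integral_const]
    simp only [probReal_univ, measure_univ, ENNReal.toReal_one, smul_eq_mul, one_mul]
    ring
  -- vanishing of cross terms
  have hwmean : ∀ n, ∫ ω, w n ω ∂μ = 0 := by
    intro n
    simp only [hw]
    rw [integral_sub (hYint n) (integrable_const _), hYmean n, integral_const]
    simp
  have hcross : ∀ n n', n ≠ n' → ∫ ω, w n ω * w n' ω ∂μ = 0 := by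
    intro n n' hnn
    have hpair := hindep.indepFun_prodMk_prodMk hSmeas
      (Sum.inl n) (Sum.inr n) (Sum.inl n') (Sum.inr n')
      (by simpa using hnn) (by simp) (by simp) (by simpa using hnn)
    have hYind : IndepFun (Y n) (Y n') μ := by
      have h1 : Measurable fun pq : ℝ × ℝ => pq.1 * (pq.2 + a n) := by fun_prop
      have h2 : Measurable fun pq : ℝ × ℝ => pq.1 * (pq.2 + a n') := by fun_prop
      exact hpair.comp h1 h2
    have hwind : IndepFun (w n) (w n') μ :=
      hYind.comp (measurable_id.sub_const (p * a n)) (measurable_id.sub_const (p * a n'))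
    have hmul := hwind.integral_fun_mul_eq_mul_integral (hwint n).aestronglyMeasurable (hwint n').aestronglyMeasurable
    calc ∫ ω, w n ω * w n' ω ∂μ = (∫ ω, w n ω ∂μ) * ∫ ω, w n' ω ∂μ := hmul
    _ = 0 := by rw [hwmean n]; ring
  -- the kernel has unit norm
  have hknorm : ∀ n : Fin N, (dftKernel N n m).re ^ 2 + (dftKernel N n m).im ^ 2 = 1 := by
    intro n
    have h1 : (-2 * (Real.pi : ℂ) * Complex.I * ((n : ℕ) : ℂ) * ((m : ℕ) : ℂ) / ((N : ℕ) : ℂ))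
        = ((-2 * Real.pi * (n : ℕ) * (m : ℕ) / (N : ℕ) : ℝ) : ℂ) * Complex.I := by
      push_cast; ring
    have habs : ‖dftKernel N n m‖ = 1 := by
      rw [dftKernel, h1]; exact Complex.norm_exp_ofReal_mul_I _
    have h2 := Complex.sq_norm (dftKernel N n m)
    rw [habs, Complex.normSq_apply] at h2
    nlinarith [h2]
  -- rewrite the integrand
  have hxrw : ∀ ω, (∑ n : Fin N,
        ((P n + s n + lam * d n ω * (q n ω + r n - s n) : ℝ) : ℂ) * dftKernel N n m)
      = ∑ n : Fin N, (((P n + s n) + lam * Y n ω : ℝ) : ℂ) * dftKernel N n m := by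
    intro ω
    refine Finset.sum_congr rfl fun n _ => ?_
    rw [show (P n + s n + lam * d n ω * (q n ω + r n - s n) : ℝ)
      = (P n + s n) + lam * Y n ω from by simp only [hY, ha]; ring]
  have hterm_int : ∀ n, Integrable
      (fun ω => (((P n + s n) + lam * Y n ω : ℝ) : ℂ) * dftKernel N n m) μ :=
    fun n => (((integrable_const _).add ((hYint n).const_mul lam)).ofReal).mul_const _
  have hEmean : (∫ ω', ∑ n : Fin N,
        (((P n + s n) + lam * Y n ω' : ℝ) : ℂ) * dftKernel N n m ∂μ)
      = ∑ n : Fin N, (((P n + s n) + lam * (p * a n) : ℝ) : ℂ) * dftKernel N n m := by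
    rw [integral_finset_sum _ fun n _ => hterm_int n]
    refine Finset.sum_congr rfl fun n _ => ?_
    have h2 : ∫ ω, (((P n + s n) + lam * Y n ω : ℝ) : ℂ) ∂μ
        = (((P n + s n) + lam * (p * a n) : ℝ) : ℂ) := by
      rw [show (∫ ω, (((P n + s n) + lam * Y n ω : ℝ) : ℂ) ∂μ)
        = ((∫ ω, (P n + s n) + lam * Y n ω ∂μ : ℝ) : ℂ) from integral_ofReal]
      norm_cast
      have i1 : Integrable (fun ω => lam * Y n ω) μ := (hYint n).const_mul lam
      rw [integral_add (integrable_const _) i1,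
        integral_const_mul, hYmean n, integral_const]
      simp
    calc ∫ ω, (((P n + s n) + lam * Y n ω : ℝ) : ℂ) * dftKernel N n m ∂μ
        = (∫ ω, (((P n + s n) + lam * Y n ω : ℝ) : ℂ) ∂μ) * dftKernel N n m := by
          simpa [smul_eq_mul] using integral_smul_const (μ := μ)
            (f := fun ω => (((P n + s n) + lam * Y n ω : ℝ) : ℂ)) (dftKernel N n m)
    _ = _ := by rw [h2]
  have hDiff : ∀ ω, ((∑ n : Fin N, (((P n + s n) + lam * Y n ω : ℝ) : ℂ) * dftKernel N n m)
      - ∑ n : Fin N, (((P n + s n) + lam * (p * a n) : ℝ) : ℂ) * dftKernel N n m)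
      = ∑ n : Fin N, ((lam * w n ω : ℝ) : ℂ) * dftKernel N n m := by
    intro ω
    rw [← Finset.sum_sub_distrib]
    refine Finset.sum_congr rfl fun n _ => ?_
    rw [← sub_mul]
    congr 1
    simp only [hw]
    push_cast
    ring
  have hpt : ∀ ω, ‖∑ n : Fin N,
        ((lam * w n ω : ℝ) : ℂ) * dftKernel N n m‖ ^ 2
      = ∑ n : Fin N, ∑ n' : Fin N,
          (lam ^ 2 * ((dftKernel N n m).re * (dftKernel N n' m).re
            + (dftKernel N n m).im * (dftKernel N n' m).im)) * (w n ω * w n' ω) := by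
    intro ω
    rw [Complex.sq_norm, Complex.normSq_apply, Complex.re_sum, Complex.im_sum]
    simp only [Complex.re_ofReal_mul, Complex.im_ofReal_mul]
    rw [Finset.sum_mul_sum, Finset.sum_mul_sum, ← Finset.sum_add_distrib]
    refine Finset.sum_congr rfl fun n _ => ?_
    rw [← Finset.sum_add_distrib]
    refine Finset.sum_congr rfl fun n' _ => ?_
    ring
  -- main computation
  calc (∫ ω, ‖
        (∑ n : Fin N,
          ((P n + s n + lam * d n ω * (q n ω + r n - s n) : ℝ) : ℂ) * dftKernel N n m) -
         ∫ ω', ∑ n : Fin N,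
          ((P n + s n + lam * d n ω' * (q n ω' + r n - s n) : ℝ) : ℂ) * dftKernel N n m ∂μ‖ ^ 2
      ∂μ)
      = ∫ ω, ∑ n : Fin N, ∑ n' : Fin N,
          (lam ^ 2 * ((dftKernel N n m).re * (dftKernel N n' m).re
            + (dftKernel N n m).im * (dftKernel N n' m).im)) * (w n ω * w n' ω) ∂μ := by
        refine integral_congr_ae (Filter.Eventually.of_forall fun ω => ?_)
        simp only [hxrw]
        rw [hEmean, hDiff ω, hpt ω]
  _ = ∑ n : Fin N, ∑ n' : Fin N,
        (lam ^ 2 * ((dftKernel N n m).re * (dftKernel N n' m).re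
          + (dftKernel N n m).im * (dftKernel N n' m).im)) * ∫ ω, w n ω * w n' ω ∂μ := by
        rw [integral_finset_sum _ fun n _ =>
          integrable_finset_sum _ fun n' _ => (hwwint n n').const_mul _]
        refine Finset.sum_congr rfl fun n _ => ?_
        rw [integral_finset_sum _ fun n' _ => (hwwint n n').const_mul _]
        exact Finset.sum_congr rfl fun n' _ => integral_const_mul _ _
  _ = ∑ n : Fin N, lam ^ 2 * (p * Δ ^ 2 / 4 + (p - p ^ 2) * (a n) ^ 2) := by
        refine Finset.sum_congr rfl fun n _ => ?_
        rw [Finset.sum_eq_single n]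
        · rw [hVar n, show (dftKernel N n m).re * (dftKernel N n m).re
              + (dftKernel N n m).im * (dftKernel N n m).im = 1 from
              by have := hknorm n; nlinarith, mul_one]
        · intro n' _ hne
          rw [hcross n n' (Ne.symm hne), mul_zero]
        · intro h
          exact absurd (Finset.mem_univ n) h
  _ = lam ^ 2 * (p - p ^ 2) * ((∑ n : Fin N, (r n) ^ 2) + (∑ n : Fin N, (s n) ^ 2)) +
        lam ^ 2 * p * N * Δ ^ 2 / 4 := by
        have hsa : ∑ n : Fin N, (a n) ^ 2
            = (∑ n : Fin N, (r n) ^ 2) + ∑ n : Fin N, (s n) ^ 2 := by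
          have h1 : ∀ n : Fin N, (a n) ^ 2 = (r n) ^ 2 - 2 * (r n * s n) + (s n) ^ 2 :=
            fun n => by simp only [ha]; ring
          rw [Finset.sum_congr rfl fun n _ => h1 n]
          rw [Finset.sum_add_distrib, Finset.sum_sub_distrib, ← Finset.mul_sum, horth]
          ring
        have h2 : ∀ n : Fin N, lam ^ 2 * (p * Δ ^ 2 / 4 + (p - p ^ 2) * (a n) ^ 2)
            = lam ^ 2 * (p * Δ ^ 2 / 4) + lam ^ 2 * (p - p ^ 2) * (a n) ^ 2 :=
          fun n => by ring
        rw [Finset.sum_congr rfl fun n _ => h2 n, Finset.sum_add_distrib,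
          Finset.sum_const, ← Finset.mul_sum, hsa, Finset.card_univ, Fintype.card_fin,
          nsmul_eq_mul]
        ring
end
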